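/- arXiv:2401.12105 — 2 statements merged into one kernel-verified Lean document; each statement's English description precedes it below -/
import Mathlib

section
/- For s,t ∈ ℤ_d with s²+t² ≡ 1 (mod d), conjugation by the discrete beam splitter acts covariantly on Weyl operators: U_{s,t} (w(a) ⊗ w(b)) U_{s,t}† = w(sa+tb) ⊗ w(−ta+sb), where a,b ∈ ℤ_d × ℤ_d and scalar multiplication and addition on phase-space points are componentwise mod d. -/
open Matrix Kronecker BigOperators
open scoped ComplexOrder

noncomputable def omega_d (d : ℕ) : ℂ := Complex.exp (2 * Real.pi * Complex.I / d)

noncomputable def Xmat (d : ℕ) : Matrix (ZMod d) (ZMod d) ℂ :=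
  Matrix.of fun k l => if k = l + 1 then 1 else 0

noncomputable def Zmat (d : ℕ) : Matrix (ZMod d) (ZMod d) ℂ :=
  Matrix.diagonal fun k => omega_d d ^ k.val

noncomputable def weyl (d : ℕ) [NeZero d] (p q : ZMod d) : Matrix (ZMod d) (ZMod d) ℂ :=
  omega_d d ^ ((-(2⁻¹ : ZMod d) * p * q).val) • (Zmat d ^ p.val * Xmat d ^ q.val)

noncomputable def bs (d : ℕ) (s t : ZMod d) :
    Matrix (ZMod d × ZMod d) (ZMod d × ZMod d) ℂ :=
  Matrix.of fun a b => if a.1 = s * b.1 + t * b.2 ∧ a.2 = - t * b.1 + s * b.2 then 1 else 0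

noncomputable def eph (d : ℕ) (x : ZMod d) : ℂ := omega_d d ^ x.val

lemma omega_pow_d (d : ℕ) [NeZero d] : omega_d d ^ d = 1 := by
  unfold omega_d
  rw [← Complex.exp_nat_mul]
  have hd : (d : ℂ) ≠ 0 := Nat.cast_ne_zero.mpr (NeZero.ne d)
  have : (d : ℂ) * (2 * Real.pi * Complex.I / d) = 2 * Real.pi * Complex.I := by
    field_simp
  rw [this, Complex.exp_two_pi_mul_I]

lemma omega_pow_mod (d : ℕ) [NeZero d] (m : ℕ) :
    omega_d d ^ m = omega_d d ^ (m % d) := by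
  conv_lhs => rw [← Nat.mod_add_div m d]
  rw [pow_add, pow_mul, omega_pow_d, one_pow, mul_one]

lemma eph_natCast (d : ℕ) [NeZero d] (m : ℕ) : eph d (m : ZMod d) = omega_d d ^ m := by
  rw [eph, ZMod.val_natCast, ← omega_pow_mod]

lemma eph_add (d : ℕ) [NeZero d] (x y : ZMod d) :
    eph d (x + y) = eph d x * eph d y := by
  have h : x + y = ((x.val + y.val : ℕ) : ZMod d) := by
    push_cast
    simp [ZMod.natCast_val, ZMod.cast_id]
  rw [h, eph_natCast, pow_add, eph, eph]

lemma Xpow_apply (d : ℕ) [NeZero d] (n : ℕ) (k l : ZMod d) :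
    (Xmat d ^ n) k l = if k = l + (n : ZMod d) then 1 else 0 := by
  induction n generalizing k l with
  | zero => simp [Matrix.one_apply]
  | succ n ih =>
    rw [pow_succ, Matrix.mul_apply, Finset.sum_eq_single (l + 1)]
    · rw [ih]
      simp only [Xmat, Matrix.of_apply, if_true, eq_self_iff_true, mul_one, Nat.cast_succ]
      rw [show l + 1 + (n : ZMod d) = l + ((n : ZMod d) + 1) from by ring]
    · intro m _ hm
      simp only [Xmat, Matrix.of_apply]
      rw [if_neg hm, mul_zero]
    · intro h; exact absurd (Finset.mem_univ _) h

lemma weyl_apply (d : ℕ) [NeZero d] (p q k l : ZMod d) :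
    weyl d p q k l = if k = l + q then eph d (-(2⁻¹ : ZMod d) * p * q + p * k) else 0 := by
  have hZ : Zmat d ^ p.val = Matrix.diagonal fun k : ZMod d => omega_d d ^ (k.val * p.val) := by
    have hfun : ((fun k : ZMod d => omega_d d ^ k.val) ^ p.val)
        = fun k : ZMod d => omega_d d ^ (k.val * p.val) := by
      funext k
      simp [pow_mul]
    rw [Zmat, Matrix.diagonal_pow, hfun]
  rw [weyl, Matrix.smul_apply, hZ, Matrix.diagonal_mul, Xpow_apply]
  have hq : ((q.val : ZMod d)) = q := by simp [ZMod.natCast_val, ZMod.cast_id]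
  rw [hq]
  by_cases h : k = l + q
  · rw [if_pos h, if_pos h, smul_eq_mul, mul_one, ← pow_add, ← eph_natCast]
    congr 1
    push_cast
    simp only [ZMod.natCast_val, ZMod.cast_id]
    ring
  · simp [if_neg h]

section conj
variable (d : ℕ) [NeZero d] (s t : ZMod d)

lemma bs_apply_eq (hst : s ^ 2 + t ^ 2 = 1) (k r : ZMod d × ZMod d) :
    bs d s t k r = if r = (s * k.1 - t * k.2, t * k.1 + s * k.2) then 1 else 0 := by
  rw [bs, Matrix.of_apply]
  refine if_congr ?_ rfl rfl
  constructor
  · rintro ⟨h1, h2⟩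
    refine Prod.ext ?_ ?_
    · linear_combination (-s) * h1 + t * h2 - r.1 * hst
    · linear_combination (-t) * h1 - s * h2 - r.2 * hst
  · rintro rfl
    constructor
    · linear_combination (-k.1) * hst
    · linear_combination (-k.2) * hst

lemma conj_entry (hst : s ^ 2 + t ^ 2 = 1)
    (M : Matrix (ZMod d × ZMod d) (ZMod d × ZMod d) ℂ) (k l : ZMod d × ZMod d) :
    (bs d s t * M * (bs d s t)ᴴ) k l
      = M (s * k.1 - t * k.2, t * k.1 + s * k.2) (s * l.1 - t * l.2, t * l.1 + s * l.2) := by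
  have h1 : (bs d s t * M) k = fun c => M (s * k.1 - t * k.2, t * k.1 + s * k.2) c := by
    funext c
    rw [Matrix.mul_apply]
    simp only [bs_apply_eq d s t hst, ite_mul, one_mul, zero_mul]
    rw [Finset.sum_ite_eq']
    simp
  rw [Matrix.mul_apply]
  simp only [h1, Matrix.conjTranspose_apply, bs_apply_eq d s t hst, apply_ite (star : ℂ → ℂ),
    star_one, star_zero, mul_ite, mul_one, mul_zero]
  rw [Finset.sum_ite_eq']
  simp

end conj

theorem stmt5 (d : ℕ) [NeZero d] (hd : d.Prime) (hodd : Odd d) (s t : ZMod d)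
    (hst : s ^ 2 + t ^ 2 = 1) (a b : ZMod d × ZMod d) :
    bs d s t * (weyl d a.1 a.2 ⊗ₖ weyl d b.1 b.2) * (bs d s t)ᴴ
      = weyl d (s * a.1 + t * b.1) (s * a.2 + t * b.2)
          ⊗ₖ weyl d (-t * a.1 + s * b.1) (-t * a.2 + s * b.2) := by
  ext k l
  rw [conj_entry d s t hst, Matrix.kroneckerMap_apply, Matrix.kroneckerMap_apply]
  simp only [weyl_apply]
  rw [ite_zero_mul_ite_zero, ite_zero_mul_ite_zero]
  refine if_congr ?_ ?_ rfl
  · constructor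
    · rintro ⟨h1, h2⟩
      constructor
      · linear_combination s * h1 + t * h2 + (l.1 - k.1) * hst
      · linear_combination (-t) * h1 + s * h2 + (l.2 - k.2) * hst
    · rintro ⟨g1, g2⟩
      constructor
      · linear_combination s * g1 - t * g2 + a.2 * hst
      · linear_combination t * g1 + s * g2 + b.2 * hst
  · rw [← eph_add, ← eph_add]
    congr 1
    linear_combination ((2⁻¹ : ZMod d) * (a.1 * a.2 + b.1 * b.2)) * hst
end

section
/- The operator A = Σ_x |−x⟩⟨x| on ℂ^d (d odd prime) equals (1/d) Σ_{(u,v)∈ℤ_d×ℤ_d} w(u,v), i.e., the uniform sum of all Weyl operators. -/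
open Matrix Kronecker BigOperators
open scoped ComplexOrder

noncomputable def Amat (d : ℕ) : Matrix (ZMod d) (ZMod d) ℂ :=
  Matrix.of fun k l => if k = -l then 1 else 0

lemma Xmat_pow (d : ℕ) [NeZero d] (n : ℕ) :
    Xmat d ^ n = Matrix.of fun k l => if k = l + (n : ZMod d) then 1 else 0 := by
  induction n with
  | zero => ext k l; simp [Matrix.one_apply]
  | succ n ih =>
    ext k l
    rw [pow_succ, Matrix.mul_apply]
    simp only [ih, Matrix.of_apply]
    simp only [Xmat, Matrix.of_apply]
    rw [Finset.sum_eq_single (l + 1)]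
    · have : l + 1 + (n : ZMod d) = l + ((n : ℕ) + 1 : ℕ) := by push_cast; ring
      simp [this]
    · intro b _ hb; simp [hb]
    · intro h; exact absurd (Finset.mem_univ _) h

theorem stmt11 (d : ℕ) [NeZero d] (hd : d.Prime) (hodd : Odd d) :
    Amat d = (1 / (d : ℂ)) • ∑ x : ZMod d × ZMod d, weyl d x.1 x.2 := by
  haveI : Fact d.Prime := ⟨hd⟩
  set ζ := omega_d d with hζdef
  have hprim : IsPrimitiveRoot ζ d := by
    rw [hζdef]; unfold omega_d; exact Complex.isPrimitiveRoot_exp d (NeZero.ne d)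
  have hpow : ζ ^ d = 1 := hprim.pow_eq_one
  set ψ : AddChar (ZMod d) ℂ := AddChar.zmodChar d hpow with hψdef
  have hψprim : AddChar.IsPrimitive ψ :=
    AddChar.zmodChar_primitive_of_primitive_root d hprim
  have hψ_mul : ∀ a b : ZMod d, ψ (a * b) = ζ ^ (a.val * b.val) := by
    intro a b
    rw [hψdef, AddChar.zmodChar_apply, ZMod.val_mul, ← pow_eq_pow_mod _ hpow]
  have h2 : (2 : ZMod d) ≠ 0 := by
    intro h
    have h2' : ((2 : ℕ) : ZMod d) = 0 := by push_cast; exact h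
    have hdvd : d ∣ 2 := (ZMod.natCast_eq_zero_iff 2 d).mp h2'
    have := (Nat.prime_dvd_prime_iff_eq hd Nat.prime_two).mp hdvd
    rw [this] at hodd
    exact (Nat.not_odd_iff_even.mpr (by norm_num)) hodd
  have hdC : (d : ℂ) ≠ 0 := Nat.cast_ne_zero.mpr (NeZero.ne d)
  ext k l
  have hentry : ∀ p q : ZMod d, weyl d p q k l =
      ψ (-(2⁻¹ : ZMod d) * p * q + k * p) * (if k = l + q then 1 else 0) := by
    intro p q
    rw [weyl, Matrix.smul_apply, smul_eq_mul, Zmat, Matrix.diagonal_pow,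
      Xmat_pow, Matrix.diagonal_mul, Matrix.of_apply]
    rw [AddChar.map_add_eq_mul, hψ_mul k p]
    rw [hψdef, AddChar.zmodChar_apply]
    simp only [Pi.pow_apply, ← pow_mul, ZMod.natCast_zmod_val]
    ring
  rw [Matrix.smul_apply, Matrix.sum_apply]
  simp only [hentry]
  rw [Fintype.sum_prod_type]
  have hinner : ∀ p : ZMod d,
      (∑ q : ZMod d, ψ (-(2⁻¹ : ZMod d) * p * q + k * p) * (if k = l + q then 1 else 0))
      = ψ (p * ((k + l) * 2⁻¹)) := by
    intro p
    have hcond : ∀ q : ZMod d, (k = l + q) ↔ (q = k - l) := by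
      intro q; constructor
      · intro h; rw [h]; ring
      · intro h; rw [h]; ring
    simp only [hcond, mul_ite, mul_one, mul_zero]
    rw [Finset.sum_ite_eq' Finset.univ (k - l)
      (fun q => ψ (-(2⁻¹ : ZMod d) * p * q + k * p))]
    simp only [Finset.mem_univ, if_true]
    congr 1
    field_simp
    ring
  simp only [hinner]
  rw [AddChar.sum_mulShift _ hψprim, ZMod.card]
  have hiff : ((k + l) * 2⁻¹ = 0) ↔ (k = -l) := by
    rw [mul_eq_zero]
    have : (2⁻¹ : ZMod d) ≠ 0 := inv_ne_zero h2
    simp [this, add_eq_zero_iff_eq_neg]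
  rw [Amat, Matrix.of_apply]
  by_cases hk : k = -l
  · rw [if_pos hk, if_pos (hiff.mpr hk), smul_eq_mul]
    field_simp
  · rw [if_neg hk, if_neg (fun h => hk (hiff.mp h))]
    simp
end
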